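/- Let N ≥ 3 be a natural number and α > 0 a real number. Define the 2×2 observables A*_{10} = ((N−1)α·σz + σx)/√(1+(N−1)²α²), A*_{11} = (−(N−1)·σz + σx)/√(1+(N−1)²), and A*_{i0} = σx, A*_{i1} = σz for 2 ≤ i ≤ N. Let B*_N(α) be the Bell operator built from these observables. Then ⟨GHZ_N, B*_N(α) GHZ_N⟩ = √(1+(N−1)²α²) + √(1+(N−1)²). -/
import Mathlib


open Matrix BigOperators Finset

noncomputable section

/-- Tensor product of `N` 2×2 complex matrices, indexed by bit strings `Fin N → Fin 2`. -/
def tensorN (N : ℕ) (M : Fin N → Matrix (Fin 2) (Fin 2) ℂ) :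
    Matrix (Fin N → Fin 2) (Fin N → Fin 2) ℂ :=
  Matrix.of fun f g => ∏ i, M i (f i) (g i)

def sigmax : Matrix (Fin 2) (Fin 2) ℂ := !![0, 1; 1, 0]
def sigmaz : Matrix (Fin 2) (Fin 2) ℂ := !![1, 0; 0, -1]

/-- The `N`-qubit GHZ state. -/
def ghz (N : ℕ) : (Fin N → Fin 2) → ℂ := fun f =>
  if f = (fun _ => 0) then ((Real.sqrt 2 : ℝ) : ℂ)⁻¹
  else if f = (fun _ => 1) then ((Real.sqrt 2 : ℝ) : ℂ)⁻¹ else 0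

/-- The Bell operator `B_N(α)` built from qubit observables `A i 0`, `A i 1` at party
`i`, with party `1` being the index `⟨0, _⟩ : Fin N`. -/
def bellOp (N : ℕ) (hN : 0 < N) (α : ℝ)
    (A : Fin N → Fin 2 → Matrix (Fin 2) (Fin 2) ℂ) :
    Matrix (Fin N → Fin 2) (Fin N → Fin 2) ℂ :=
  tensorN N (fun i => if i = (⟨0, hN⟩ : Fin N) then A i 0 + A i 1 else A i 0)
    + ∑ i ∈ univ.filter (fun i : Fin N => i ≠ (⟨0, hN⟩ : Fin N)),
        tensorN N (fun j => if j = (⟨0, hN⟩ : Fin N) then (α : ℂ) • A j 0 - A j 1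
          else if j = i then A j 1 else 1)

/-- The optimal observables of Theorem 1:
`A*₁₀ = ((N−1)α σz + σx)/√(1+(N−1)²α²)`, `A*₁₁ = (−(N−1) σz + σx)/√(1+(N−1)²)`,
and `A*ᵢ₀ = σx`, `A*ᵢ₁ = σz` for `i ≥ 2`. -/
def Astar (N : ℕ) (α : ℝ) : Fin N → Fin 2 → Matrix (Fin 2) (Fin 2) ℂ := fun i j =>
  if (i : ℕ) = 0 then
    if j = 0 then
      ((Real.sqrt (1 + ((N : ℝ) - 1) ^ 2 * α ^ 2) : ℝ) : ℂ)⁻¹ •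
        (((((N : ℝ) - 1) * α : ℝ) : ℂ) • sigmaz + sigmax)
    else
      ((Real.sqrt (1 + ((N : ℝ) - 1) ^ 2) : ℝ) : ℂ)⁻¹ •
        (((-((N : ℝ) - 1) : ℝ) : ℂ) • sigmaz + sigmax)
  else if j = 0 then sigmax else sigmaz


lemma ghz_quad (N : ℕ) (hN : 0 < N) (M : Matrix (Fin N → Fin 2) (Fin N → Fin 2) ℂ) :
    star (ghz N) ⬝ᵥ M.mulVec (ghz N)
      = (2:ℂ)⁻¹ * (M (fun _ => 0) (fun _ => 0) + M (fun _ => 0) (fun _ => 1)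
          + M (fun _ => 1) (fun _ => 0) + M (fun _ => 1) (fun _ => 1)) := by
  classical
  set z : Fin N → Fin 2 := fun _ => 0 with hz
  set o : Fin N → Fin 2 := fun _ => 1 with ho
  have hzo : z ≠ o := fun h => absurd (congrFun h ⟨0, hN⟩) (by simp [hz, ho])
  set c : ℂ := ((Real.sqrt 2 : ℝ) : ℂ)⁻¹ with hc
  have hg : ∀ f, ghz N f = if f = z then c else if f = o then c else 0 := fun f => rfl
  have hsum : ∀ w : (Fin N → Fin 2) → ℂ,
      (∑ f, w f * ghz N f) = w z * c + w o * c := by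
    intro w
    have key : ∀ f, w f * ghz N f
        = (if f = z then w z * c else 0) + (if f = o then w o * c else 0) := by
      intro f
      rw [hg]
      by_cases h1 : f = z
      · subst h1; simp [hzo]
      · by_cases h2 : f = o
        · subst h2; simp [h1]
        · simp [h1, h2]
    rw [Finset.sum_congr rfl fun f _ => key f, Finset.sum_add_distrib]
    simp
  have hstar : star (ghz N) = ghz N := by
    funext f
    rw [Pi.star_apply, hg]
    split_ifs <;> simp [hc]
  have hcc : c * c = (2:ℂ)⁻¹ := by
    rw [hc, ← mul_inv, show ((Real.sqrt 2:ℝ):ℂ) * ((Real.sqrt 2:ℝ):ℂ) = ((2:ℝ):ℂ) by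
      rw [← Complex.ofReal_mul, Real.mul_self_sqrt (by norm_num)]]
    norm_num
  have hrow : ∀ f, M.mulVec (ghz N) f = M f z * c + M f o * c := fun f => hsum _
  calc star (ghz N) ⬝ᵥ M.mulVec (ghz N)
      = ∑ f, M.mulVec (ghz N) f * ghz N f := by
        rw [hstar, dotProduct]
        exact Finset.sum_congr rfl fun f _ => mul_comm _ _
    _ = (M z z * c + M z o * c) * c + (M o z * c + M o o * c) * c := by
        rw [hsum, hrow, hrow]
    _ = _ := by
        linear_combination (M z z + M z o + M o z + M o o) * hcc

section entries

lemma sxe : (sigmax 0 0 = 0 ∧ sigmax 0 1 = 1 ∧ sigmax 1 0 = 1 ∧ sigmax 1 1 = 0)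
    ∧ (sigmaz 0 0 = 1 ∧ sigmaz 0 1 = 0 ∧ sigmaz 1 0 = 0 ∧ sigmaz 1 1 = -1) := by
  refine ⟨⟨?_, ?_, ?_, ?_⟩, ⟨?_, ?_, ?_, ?_⟩⟩ <;> simp [sigmax, sigmaz]

lemma entry00 (c u : ℝ) : (((c:ℝ):ℂ)⁻¹ • ((((u:ℝ)):ℂ) • sigmaz + sigmax)) 0 0
    = ((c⁻¹ * u : ℝ) : ℂ) := by
  simp [sigmaz, sigmax]

lemma entry01 (c u : ℝ) : (((c:ℝ):ℂ)⁻¹ • ((((u:ℝ)):ℂ) • sigmaz + sigmax)) 0 1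
    = ((c⁻¹ : ℝ) : ℂ) := by
  simp [sigmaz, sigmax]

lemma entry10 (c u : ℝ) : (((c:ℝ):ℂ)⁻¹ • ((((u:ℝ)):ℂ) • sigmaz + sigmax)) 1 0
    = ((c⁻¹ : ℝ) : ℂ) := by
  simp [sigmaz, sigmax]

lemma entry11 (c u : ℝ) : (((c:ℝ):ℂ)⁻¹ • ((((u:ℝ)):ℂ) • sigmaz + sigmax)) 1 1
    = ((-(c⁻¹ * u) : ℝ) : ℂ) := by
  simp [sigmaz, sigmax]

end entries

lemma key_lemma (N : ℕ) (hN : 3 ≤ N) (α : ℝ) (h0 : 0 < N) :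
    star (ghz N) ⬝ᵥ (bellOp N h0 α (Astar N α)).mulVec (ghz N)
      = ((Real.sqrt (1 + ((N : ℝ) - 1) ^ 2 * α ^ 2)
          + Real.sqrt (1 + ((N : ℝ) - 1) ^ 2) : ℝ) : ℂ) := by
  classical
  have h1N : (1:ℕ) < N := by omega
  have h2N : (2:ℕ) < N := by omega
  set i0 : Fin N := ⟨0, h0⟩ with hi0
  set i1 : Fin N := ⟨1, h1N⟩ with hi1
  set i2 : Fin N := ⟨2, h2N⟩ with hi2
  have hi10 : i1 ≠ i0 := by simp [hi0, hi1, Fin.ext_iff]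
  have hi20 : i2 ≠ i0 := by simp [hi0, hi2, Fin.ext_iff]
  have hi12 : i1 ≠ i2 := by simp [hi1, hi2, Fin.ext_iff]
  have hAx : ∀ b : Fin N, b ≠ i0 → Astar N α b 0 = sigmax := by
    intro b hb
    have hb' : (b:ℕ) ≠ 0 := fun h => hb (Fin.ext (by simp [hi0, h]))
    simp [Astar, hb']
  have hAz : ∀ b : Fin N, b ≠ i0 → Astar N α b 1 = sigmaz := by
    intro b hb
    have hb' : (b:ℕ) ≠ 0 := fun h => hb (Fin.ext (by simp [hi0, h]))
    simp [Astar, hb']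
  have hA00 : Astar N α i0 0
      = ((Real.sqrt (1 + ((N:ℝ)-1)^2*α^2) : ℝ):ℂ)⁻¹ •
          (((((N:ℝ)-1)*α : ℝ):ℂ) • sigmaz + sigmax) := by
    simp [Astar, hi0]
  have hA01 : Astar N α i0 1
      = ((Real.sqrt (1 + ((N:ℝ)-1)^2) : ℝ):ℂ)⁻¹ •
          (((-((N:ℝ)-1) : ℝ):ℂ) • sigmaz + sigmax) := by
    simp [Astar, hi0]
  rw [ghz_quad N h0]
  have hB : ∀ a b : Fin 2, bellOp N h0 α (Astar N α) (fun _ => a) (fun _ => b)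
      = (∏ i, (if i = i0 then Astar N α i 0 + Astar N α i 1 else Astar N α i 0) a b)
        + ∑ i ∈ univ.filter (fun i : Fin N => i ≠ i0),
            (∏ j, (if j = i0 then (α:ℂ) • Astar N α j 0 - Astar N α j 1
                   else if j = i then Astar N α j 1 else 1) a b) := by
    intro a b
    simp [bellOp, tensorN, Matrix.add_apply, Matrix.sum_apply, hi0]
  have hP1 : (∏ i, (if i = i0 then Astar N α i 0 + Astar N α i 1 else Astar N α i 0) 0 0)
      = 0 := by
    apply Finset.prod_eq_zero (Finset.mem_univ i1)
    rw [if_neg hi10, hAx i1 hi10]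
    simp [sigmax]
  have hP4 : (∏ i, (if i = i0 then Astar N α i 0 + Astar N α i 1 else Astar N α i 0) 1 1)
      = 0 := by
    apply Finset.prod_eq_zero (Finset.mem_univ i1)
    rw [if_neg hi10, hAx i1 hi10]
    simp [sigmax]
  have hP2 : (∏ i, (if i = i0 then Astar N α i 0 + Astar N α i 1 else Astar N α i 0) 0 1)
      = (((Real.sqrt (1 + ((N:ℝ)-1)^2*α^2))⁻¹ : ℝ):ℂ)
        + (((Real.sqrt (1 + ((N:ℝ)-1)^2))⁻¹ : ℝ):ℂ) := by
    rw [Fintype.prod_eq_single i0 (fun b hb => by rw [if_neg hb, hAx b hb]; simp [sigmax])]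
    rw [if_pos rfl, Matrix.add_apply, hA00, hA01, entry01, entry01]
  have hP3 : (∏ i, (if i = i0 then Astar N α i 0 + Astar N α i 1 else Astar N α i 0) 1 0)
      = (((Real.sqrt (1 + ((N:ℝ)-1)^2*α^2))⁻¹ : ℝ):ℂ)
        + (((Real.sqrt (1 + ((N:ℝ)-1)^2))⁻¹ : ℝ):ℂ) := by
    rw [Fintype.prod_eq_single i0 (fun b hb => by rw [if_neg hb, hAx b hb]; simp [sigmax])]
    rw [if_pos rfl, Matrix.add_apply, hA00, hA01, entry10, entry10]
  have hQ1 : ∀ i : Fin N, i ≠ i0 →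
      (∏ j, (if j = i0 then (α:ℂ) • Astar N α j 0 - Astar N α j 1
             else if j = i then Astar N α j 1 else 1) 0 0)
      = (α:ℂ) * (((Real.sqrt (1 + ((N:ℝ)-1)^2*α^2))⁻¹ * (((N:ℝ)-1)*α) : ℝ):ℂ)
        - (((Real.sqrt (1 + ((N:ℝ)-1)^2))⁻¹ * (-((N:ℝ)-1)) : ℝ):ℂ) := by
    intro i hi
    have hone : ∀ b : Fin N, b ≠ i0 →
        ((if b = i0 then (α:ℂ) • Astar N α b 0 - Astar N α b 1
          else if b = i then Astar N α b 1 else 1) : Matrix (Fin 2) (Fin 2) ℂ) 0 0 = 1 := by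
      intro b hb
      rw [if_neg hb]
      by_cases hbi : b = i
      · rw [if_pos hbi, hAz b hb]; simp [sigmaz]
      · rw [if_neg hbi]; simp [Matrix.one_apply]
    rw [Fintype.prod_eq_single i0 hone, if_pos rfl, Matrix.sub_apply, Matrix.smul_apply,
      hA00, hA01, entry00, entry00, smul_eq_mul]
  have hQ4 : ∀ i : Fin N, i ≠ i0 →
      (∏ j, (if j = i0 then (α:ℂ) • Astar N α j 0 - Astar N α j 1
             else if j = i then Astar N α j 1 else 1) 1 1)
      = ((α:ℂ) * ((-((Real.sqrt (1 + ((N:ℝ)-1)^2*α^2))⁻¹ * (((N:ℝ)-1)*α)) : ℝ):ℂ)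
          - ((-((Real.sqrt (1 + ((N:ℝ)-1)^2))⁻¹ * (-((N:ℝ)-1))) : ℝ):ℂ)) * (-1) := by
    intro i hi
    have htwo : ∀ x : Fin N, x ≠ i0 ∧ x ≠ i →
        ((if x = i0 then (α:ℂ) • Astar N α x 0 - Astar N α x 1
          else if x = i then Astar N α x 1 else 1) : Matrix (Fin 2) (Fin 2) ℂ) 1 1 = 1 := by
      intro x hx
      rw [if_neg hx.1, if_neg hx.2]
      simp [Matrix.one_apply]
    rw [Fintype.prod_eq_mul i0 i (Ne.symm hi) htwo, if_pos rfl, if_neg hi, if_pos rfl,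
      Matrix.sub_apply, Matrix.smul_apply, hA00, hA01, entry11, entry11, hAz i hi,
      smul_eq_mul]
    simp [sigmaz]
  have hQ2 : ∀ i : Fin N, i ≠ i0 →
      (∏ j, (if j = i0 then (α:ℂ) • Astar N α j 0 - Astar N α j 1
             else if j = i then Astar N α j 1 else 1) 0 1) = 0 := by
    intro i hi
    obtain ⟨j, hj0, hji⟩ : ∃ j : Fin N, j ≠ i0 ∧ j ≠ i := by
      by_cases h : i = i1
      · exact ⟨i2, hi20, by rw [h]; exact hi12.symm⟩
      · exact ⟨i1, hi10, fun hc => h hc.symm⟩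
    apply Finset.prod_eq_zero (Finset.mem_univ j)
    rw [if_neg hj0, if_neg hji]
    simp [Matrix.one_apply]
  have hQ3 : ∀ i : Fin N, i ≠ i0 →
      (∏ j, (if j = i0 then (α:ℂ) • Astar N α j 0 - Astar N α j 1
             else if j = i then Astar N α j 1 else 1) 1 0) = 0 := by
    intro i hi
    obtain ⟨j, hj0, hji⟩ : ∃ j : Fin N, j ≠ i0 ∧ j ≠ i := by
      by_cases h : i = i1
      · exact ⟨i2, hi20, by rw [h]; exact hi12.symm⟩
      · exact ⟨i1, hi10, fun hc => h hc.symm⟩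
    apply Finset.prod_eq_zero (Finset.mem_univ j)
    rw [if_neg hj0, if_neg hji]
    simp [Matrix.one_apply]
  have hcard : (univ.filter (fun i : Fin N => i ≠ i0)).card = N - 1 := by
    rw [Finset.filter_ne', Finset.card_erase_of_mem (Finset.mem_univ _), Finset.card_univ,
      Fintype.card_fin]
  have hS1 : ∑ i ∈ univ.filter (fun i : Fin N => i ≠ i0),
      (∏ j, (if j = i0 then (α:ℂ) • Astar N α j 0 - Astar N α j 1
             else if j = i then Astar N α j 1 else 1) 0 0)
      = ((N - 1 : ℕ) : ℂ) * ((α:ℂ) * (((Real.sqrt (1 + ((N:ℝ)-1)^2*α^2))⁻¹ * (((N:ℝ)-1)*α) : ℝ):ℂ)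
          - (((Real.sqrt (1 + ((N:ℝ)-1)^2))⁻¹ * (-((N:ℝ)-1)) : ℝ):ℂ)) := by
    rw [Finset.sum_congr rfl (fun i hi => hQ1 i (Finset.mem_filter.mp hi).2),
      Finset.sum_const, hcard, nsmul_eq_mul]
  have hS2 : ∑ i ∈ univ.filter (fun i : Fin N => i ≠ i0),
      (∏ j, (if j = i0 then (α:ℂ) • Astar N α j 0 - Astar N α j 1
             else if j = i then Astar N α j 1 else 1) 0 1) = 0 := by
    rw [Finset.sum_congr rfl (fun i hi => hQ2 i (Finset.mem_filter.mp hi).2),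
      Finset.sum_const_zero]
  have hS3 : ∑ i ∈ univ.filter (fun i : Fin N => i ≠ i0),
      (∏ j, (if j = i0 then (α:ℂ) • Astar N α j 0 - Astar N α j 1
             else if j = i then Astar N α j 1 else 1) 1 0) = 0 := by
    rw [Finset.sum_congr rfl (fun i hi => hQ3 i (Finset.mem_filter.mp hi).2),
      Finset.sum_const_zero]
  have hS4 : ∑ i ∈ univ.filter (fun i : Fin N => i ≠ i0),
      (∏ j, (if j = i0 then (α:ℂ) • Astar N α j 0 - Astar N α j 1
             else if j = i then Astar N α j 1 else 1) 1 1)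
      = ((N - 1 : ℕ) : ℂ) * (((α:ℂ) * ((-((Real.sqrt (1 + ((N:ℝ)-1)^2*α^2))⁻¹ * (((N:ℝ)-1)*α)) : ℝ):ℂ)
          - ((-((Real.sqrt (1 + ((N:ℝ)-1)^2))⁻¹ * (-((N:ℝ)-1))) : ℝ):ℂ)) * (-1)) := by
    rw [Finset.sum_congr rfl (fun i hi => hQ4 i (Finset.mem_filter.mp hi).2),
      Finset.sum_const, hcard, nsmul_eq_mul]
  rw [hB, hB, hB, hB, hP1, hP2, hP3, hP4, hS1, hS2, hS3, hS4]
  have hXr : Real.sqrt (1 + ((N:ℝ)-1)^2*α^2) * Real.sqrt (1 + ((N:ℝ)-1)^2*α^2)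
      = 1 + ((N:ℝ)-1)^2*α^2 := Real.mul_self_sqrt (by positivity)
  have hYr : Real.sqrt (1 + ((N:ℝ)-1)^2) * Real.sqrt (1 + ((N:ℝ)-1)^2)
      = 1 + ((N:ℝ)-1)^2 := Real.mul_self_sqrt (by positivity)
  have hXc : ((Real.sqrt (1 + ((N:ℝ)-1)^2*α^2) : ℝ):ℂ) * ((Real.sqrt (1 + ((N:ℝ)-1)^2*α^2) : ℝ):ℂ)
      = 1 + ((N:ℂ)-1)^2*(α:ℂ)^2 := by exact_mod_cast hXr
  have hYc : ((Real.sqrt (1 + ((N:ℝ)-1)^2) : ℝ):ℂ) * ((Real.sqrt (1 + ((N:ℝ)-1)^2) : ℝ):ℂ)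
      = 1 + ((N:ℂ)-1)^2 := by exact_mod_cast hYr
  have hX0 : ((Real.sqrt (1 + ((N:ℝ)-1)^2*α^2) : ℝ):ℂ) ≠ 0 := by
    exact_mod_cast (Real.sqrt_pos.mpr (by positivity)).ne'
  have hY0 : ((Real.sqrt (1 + ((N:ℝ)-1)^2) : ℝ):ℂ) ≠ 0 := by
    exact_mod_cast (Real.sqrt_pos.mpr (by positivity)).ne'
  push_cast [Nat.cast_sub (by omega : 1 ≤ N)]
  field_simp
  linear_combination (-2*((Real.sqrt (1 + ((N:ℝ)-1)^2):ℝ):ℂ)) * hXc + (-2*((Real.sqrt (1 + ((N:ℝ)-1)^2*α^2):ℝ):ℂ)) * hYc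

/-- Theorem 1 (achievability): the GHZ state with the optimal observables attains the
quantum bound `√(1+(N−1)²α²) + √(1+(N−1)²)`. -/
theorem ghz_attains_quantum_bound (N : ℕ) (hN : 3 ≤ N) (α : ℝ) (hα : 0 < α) :
    star (ghz N) ⬝ᵥ (bellOp N (by omega) α (Astar N α)).mulVec (ghz N)
      = ((Real.sqrt (1 + ((N : ℝ) - 1) ^ 2 * α ^ 2)
          + Real.sqrt (1 + ((N : ℝ) - 1) ^ 2) : ℝ) : ℂ) := by
  exact key_lemma N hN α (by omega)
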